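/- Let C ⊂ ℝ⁷ ≅ Im ℍ × ℍ be a 4-dimensional linear subspace that is coassociative, i.e. Ω(u,v,w) = 0 for all u, v, w ∈ C, and let n be a unit vector orthogonal to C. Then the map J_n(u) = n × u sends C into C and is a Hermitian complex structure on C: J_n(J_n(u)) = −u and ‖J_n(u)‖ = ‖u‖ for every u ∈ C. -/

import Mathlib

noncomputable section

/-- The Euclidean inner product on `ℝ⁷ ≅ Im ℍ × ℍ`:
`⟨(a,b),(c,d)⟩ = Re(a c*) + Re(b d*)`. -/
def oinner (x y : Quaternion ℝ × Quaternion ℝ) : ℝ :=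
  (x.1 * star y.1).re + (x.2 * star y.2).re

/-- The induced Euclidean norm. -/
def onorm (x : Quaternion ℝ × Quaternion ℝ) : ℝ :=
  Real.sqrt (oinner x x)

/-- The octonionic cross product on `ℝ⁷ ≅ Im ℍ × ℍ` (Cayley–Dickson):
`(a,b) × (c,d) = (Im(a c − d* b), d a + b c*)`. -/
def ocross (x y : Quaternion ℝ × Quaternion ℝ) : Quaternion ℝ × Quaternion ℝ :=
  ((x.1 * y.1 - star y.2 * x.2).im, y.2 * x.1 + x.2 * star y.1)

/-!
For `0 ≠ u ∈ C`, the map `x ↦ u × x` is injective on `C ∩ u⊥` by the Lagrange identity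
`|u × x|² = |u|²|x|² - ⟨u, x⟩²`, and coassociativity sends it into the normal space `C⊥ ∩ Im 𝕆`.
Both spaces are 3-dimensional, so `n = u × x` for some `x ∈ C ∩ u⊥`, and then
`n × u = -u × (u × x) = |u|² x ∈ C`. The identities `J_n² = -1` and `|J_n u| = |u|` are the
double cross product and Lagrange identities for the unit vector `n ⊥ u`.
-/

open Quaternion Module Submodule

theorem Submodule.map_eq_of_injOn_of_finrank_le {K V W : Type*} [DivisionRing K]
    [AddCommGroup V] [Module K V] [AddCommGroup W] [Module K W] {D : Submodule K V}
    {N : Submodule K W} [FiniteDimensional K N] (f : V →ₗ[K] W)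
    (hinj : ∀ x ∈ D, f x = 0 → x = 0) (hle : D.map f ≤ N) (hdim : finrank K N ≤ finrank K D) :
    D.map f = N := by
  refine eq_of_le_of_finrank_le hle ?_
  have hinj' : Function.Injective (f ∘ₗ D.subtype) := by
    rw [← LinearMap.ker_eq_bot, LinearMap.ker_eq_bot']
    exact fun x hx => Subtype.ext (hinj x x.2 hx)
  rwa [← LinearMap.finrank_range_of_inj hinj', LinearMap.range_comp, range_subtype] at hdim

variable {u x y : ℍ[ℝ] × ℍ[ℝ]}

lemma oinner_comm (x y : ℍ[ℝ] × ℍ[ℝ]) : oinner x y = oinner y x := by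
  simp only [oinner, re_mul, re_star, imI_star, imJ_star, imK_star]
  ring

lemma ocross_fst_re (x y : ℍ[ℝ] × ℍ[ℝ]) : (ocross x y).1.re = 0 := re_im _

lemma ocross_anticomm (hx : x.1.re = 0) (hy : y.1.re = 0) : ocross x y = -ocross y x := by
  ext <;> simp [ocross, re_mul, imI_mul, imJ_mul, imK_mul, hx, hy] <;> ring

lemma ocross_ocross_self_left (hu : u.1.re = 0) (hx : x.1.re = 0) :
    ocross u (ocross u x) = oinner u x • u - oinner u u • x := by
  ext <;> simp [ocross, oinner, re_mul, imI_mul, imJ_mul, imK_mul, hu, hx] <;> ring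

lemma oinner_ocross_self (hu : u.1.re = 0) (hx : x.1.re = 0) :
    oinner (ocross u x) (ocross u x) = oinner u u * oinner x x - oinner u x ^ 2 := by
  simp [ocross, oinner, re_mul, imI_mul, imJ_mul, imK_mul, hu, hx]
  ring

def ocrossₗ (u : ℍ[ℝ] × ℍ[ℝ]) : (ℍ[ℝ] × ℍ[ℝ]) →ₗ[ℝ] ℍ[ℝ] × ℍ[ℝ] where
  toFun := ocross u
  map_add' x y := by
    ext <;> simp [ocross, re_mul, imI_mul, imJ_mul, imK_mul] <;> ring
  map_smul' r x := by
    simp only [ocross, Prod.smul_fst, Prod.smul_snd, Quaternion.star_smul, smul_mul_assoc,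
      mul_smul_comm, ← smul_sub, ← smul_add, im_smul, Prod.smul_mk, RingHom.id_apply]

/-- The product norm on `ℍ × ℍ` is the sup norm; `WithLp 2` carries the Euclidean structure,
whose inner product is `oinner` by definition. -/
abbrev EuclideanOct := WithLp 2 (ℍ[ℝ] × ℍ[ℝ])

lemma inner_eq_oinner (x y : EuclideanOct) : inner ℝ x y = oinner x.ofLp y.ofLp := rfl

lemma oinner_self_eq_zero : oinner x x = 0 ↔ x = 0 :=
  (inner_self_eq_zero (x := WithLp.toLp 2 x)).trans (WithLp.toLp_eq_zero 2)

lemma eq_zero_of_ocross_eq_zero (hu : u.1.re = 0) (hx : x.1.re = 0) (hu0 : u ≠ 0)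
    (hux : oinner u x = 0) (h : ocross u x = 0) : x = 0 := by
  have hlagrange := oinner_ocross_self hu hx
  rw [h, hux, (oinner_self_eq_zero (x := 0)).2 rfl] at hlagrange
  have : oinner u u * oinner x x = 0 := by linear_combination -hlagrange
  exact oinner_self_eq_zero.1 ((mul_eq_zero.1 this).resolve_left (mt oinner_self_eq_zero.1 hu0))

def imOct : Submodule ℝ EuclideanOct :=
  LinearMap.ker (QuaternionAlgebra.reₗ _ _ _ ∘ₗ LinearMap.fst ℝ _ _ ∘ₗ
    (WithLp.linearEquiv 2 ℝ (ℍ[ℝ] × ℍ[ℝ])).toLinearMap)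

lemma finrank_imOct : finrank ℝ imOct = 7 := by
  have hker : finrank ℝ imOct + 1 = finrank ℝ EuclideanOct :=
    Dual.finrank_ker_add_one_of_ne_zero
      fun h => absurd (LinearMap.congr_fun h (WithLp.toLp 2 (1, 0))) one_ne_zero
  rw [(WithLp.linearEquiv 2 ℝ (ℍ[ℝ] × ℍ[ℝ])).finrank_eq, finrank_prod,
    finrank_eq_four] at hker
  exact Nat.add_right_cancel hker

theorem exists_ocross_eq_of_coassociative {C : Submodule ℝ (ℍ[ℝ] × ℍ[ℝ])}
    (hC : ∀ x ∈ C, x.1.re = 0) (hdim : finrank ℝ C = 4)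
    (hcoassoc : ∀ u ∈ C, ∀ v ∈ C, ∀ w ∈ C, oinner (ocross u v) w = 0)
    {u : ℍ[ℝ] × ℍ[ℝ]} (hu : u ∈ C) (hu0 : u ≠ 0)
    {n : ℍ[ℝ] × ℍ[ℝ]} (hn : n.1.re = 0) (hperp : ∀ x ∈ C, oinner n x = 0) :
    ∃ x ∈ C, oinner u x = 0 ∧ ocross u x = n := by
  let e := WithLp.linearEquiv 2 ℝ (ℍ[ℝ] × ℍ[ℝ])
  set C' : Submodule ℝ EuclideanOct := C.comap e.toLinearMap
  set D : Submodule ℝ EuclideanOct := (ℝ ∙ WithLp.toLp 2 u)ᗮ ⊓ C'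
  set N : Submodule ℝ EuclideanOct := C'ᗮ ⊓ imOct
  have hC'dim : finrank ℝ C' = 4 := by
    rw [← hdim, ← e.symm.finrank_map_eq C, ← comap_equiv_eq_map_symm]
  have hC'im : C' ≤ imOct := fun x hx => hC _ hx
  have huC' : (WithLp.toLp 2 u : EuclideanOct) ∈ C' := hu
  have hDdim : finrank ℝ D = 3 :=
    finrank_add_inf_finrank_orthogonal' ((span_singleton_le_iff_mem _ _).2 huC')
      (by rw [finrank_span_singleton (by simpa using hu0), hC'dim])
  have hNdim : finrank ℝ N = 3 :=
    finrank_add_inf_finrank_orthogonal' hC'im (by rw [hC'dim, finrank_imOct])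
  let f : EuclideanOct →ₗ[ℝ] EuclideanOct := e.symm.toLinearMap ∘ₗ ocrossₗ u ∘ₗ e.toLinearMap
  have hfD : D.map f = N := by
    refine map_eq_of_injOn_of_finrank_le f ?_ ?_ (by rw [hDdim, hNdim])
    · rintro x ⟨hxu, hxC⟩ hfx
      have hux : oinner u x.ofLp = 0 := mem_orthogonal_singleton_iff_inner_right.1 hxu
      have hx0 := eq_zero_of_ocross_eq_zero (hC u hu) (hC _ hxC) hu0 hux
        (congrArg WithLp.ofLp hfx)
      simpa using hx0
    · rintro _ ⟨x, ⟨-, hxC⟩, rfl⟩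
      refine ⟨fun w hw => ?_, ocross_fst_re u x.ofLp⟩
      rw [inner_eq_oinner, oinner_comm]
      exact hcoassoc u hu _ hxC _ hw
  have hnN : (WithLp.toLp 2 n : EuclideanOct) ∈ N := by
    refine ⟨fun w hw => ?_, hn⟩
    rw [inner_eq_oinner, oinner_comm]
    exact hperp _ hw
  rw [← hfD] at hnN
  obtain ⟨x, ⟨hxu, hxC⟩, hx⟩ := hnN
  exact ⟨x.ofLp, hxC, mem_orthogonal_singleton_iff_inner_right.1 hxu, congrArg WithLp.ofLp hx⟩

theorem ocross_mem_of_coassociative {C : Submodule ℝ (ℍ[ℝ] × ℍ[ℝ])}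
    (hC : ∀ x ∈ C, x.1.re = 0) (hdim : finrank ℝ C = 4)
    (hcoassoc : ∀ u ∈ C, ∀ v ∈ C, ∀ w ∈ C, oinner (ocross u v) w = 0)
    {n : ℍ[ℝ] × ℍ[ℝ]} (hn : n.1.re = 0) (hperp : ∀ x ∈ C, oinner n x = 0)
    {u : ℍ[ℝ] × ℍ[ℝ]} (hu : u ∈ C) : ocross n u ∈ C := by
  rcases eq_or_ne u 0 with rfl | hu0
  · rw [show ocross n 0 = 0 from (ocrossₗ n).map_zero]
    exact C.zero_mem
  obtain ⟨x, hxC, hux, rfl⟩ := exists_ocross_eq_of_coassociative hC hdim hcoassoc hu hu0 hn hperp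
  rw [ocross_anticomm (ocross_fst_re u x) (hC u hu),
    ocross_ocross_self_left (hC u hu) (hC x hxC), hux, zero_smul, zero_sub, neg_neg]
  exact C.smul_mem _ hxC

/-- if `C` is a coassociative 4-plane in `ℝ⁷ ≅ Im ℍ × ℍ` and `n`
is a unit normal to `C`, then `J_n(u) = n × u` sends `C` into `C` and is a
Hermitian complex structure on `C`. -/
theorem coassociative_Jn_complex_structure
    (C : Submodule ℝ (Quaternion ℝ × Quaternion ℝ))
    (hC : ∀ x ∈ C, x.1.re = 0)
    (hdim : Module.finrank ℝ C = 4)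
    (hcoassoc : ∀ u ∈ C, ∀ v ∈ C, ∀ w ∈ C, oinner (ocross u v) w = 0)
    (n : Quaternion ℝ × Quaternion ℝ) (hn : n.1.re = 0) (hnorm : onorm n = 1)
    (hperp : ∀ x ∈ C, oinner n x = 0) :
    ∀ u ∈ C,
      ocross n u ∈ C ∧
      ocross n (ocross n u) = -u ∧
      onorm (ocross n u) = onorm u := by
  intro u hu
  have hnn : oinner n n = 1 := Real.sqrt_eq_one.mp hnorm
  have hnu : oinner n u = 0 := hperp u hu
  refine ⟨ocross_mem_of_coassociative hC hdim hcoassoc hn hperp hu, ?_, ?_⟩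
  · rw [ocross_ocross_self_left hn (hC u hu), hnu, hnn, zero_smul, one_smul, zero_sub]
  · rw [onorm, onorm, oinner_ocross_self hn (hC u hu), hnn, hnu]
    congr 1
    ring
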